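/- arXiv:2605.09526 — 2 statements merged into one kernel-verified Lean document; each statement's English description precedes it below -/
import Mathlib

section
/- Let b ∈ ℝ and let N and N′ be two parity-supported refined lattice families, both satisfying the initial conditions, and suppose that for every (g,n) with 2g−2+n > 1 and every L ∈ (ℤ_{>0})^n with L₁+⋯+L_n even, both families satisfy the symmetric recursion: 2(Σ_{i=1}^n L_i)·N_{g,n}(L) = Σ_{i≠j} Σ_{p>0} p·[L_i+L_j−p]_+ · N_{g,n−1}(p, L with L_i and L_j removed) + b·Σ_{i=1}^n Σ_{p>0} p(L_i−1)·[L_i−p]_+ · N_{g−1/2,n}(p, L with L_i removed) + Σ_{i=1}^n Σ_{p,q>0} pq·[L_i−p−q]_+ · ( (1+b)·N_{g−1,n+1}(p,q, L with L_i removed) + 2·Σ_{g₁+g₂=g, I₁⊔I₂=[n]∖{i}} N_{g₁,1+|I₁|}(p,L_{I₁})·N_{g₂,1+|I₂|}(q,L_{I₂}) ). Then N = N′. -/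
open scoped BigOperators

noncomputable section

/-- The ramp function `[x]₊ = max x 0`. -/
def ramp (x : ℝ) : ℝ := max x 0

/-- The kernel `𝓡(L₁, L_m, p)`. -/
def kerR (L1 Lm p : ℝ) : ℝ :=
  (1 / (2 * L1)) * (ramp (L1 + Lm - p) - ramp (-L1 + Lm - p) + ramp (L1 - Lm - p))

/-- The kernel `𝓔(L₁, p)`. -/
def kerE (L1 p : ℝ) : ℝ := (1 / (2 * L1)) * ramp (L1 - p)

/-- The kernel `𝓓(L₁, p, q)`. -/
def kerD (L1 p q : ℝ) : ℝ := (1 / L1) * ramp (L1 - p - q)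

/-- The sublist of entries of `L` whose (0-based) index lies in `S`, in order. -/
def selectIdxs {α : Type*} (L : List α) (S : Finset ℕ) : List α :=
  L.zipIdx.filterMap fun p => if p.2 ∈ S then some p.1 else none

/-- The sublist of entries of `L` whose (0-based) index does not lie in `S`, in order. -/
def removeIdxs {α : Type*} (L : List α) (S : Finset ℕ) : List α :=
  L.zipIdx.filterMap fun p => if p.2 ∈ S then none else some p.1

/-- A refined lattice family is indexed by `h = 2g ∈ ℤ` and a tuple of boundary lengths
(a list); by convention it vanishes when `g < 0` or `2g - 2 + n ≤ 0`. -/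
def ZeroConvention (N : ℤ → List ℤ → ℝ) : Prop :=
  ∀ (h : ℤ) (L : List ℤ), h < 0 ∨ h + (L.length : ℤ) ≤ 2 → N h L = 0

/-- The family vanishes on tuples of positive integers with odd sum. -/
def ParitySupported (N : ℤ → List ℤ → ℝ) : Prop :=
  ∀ (h : ℤ) (L : List ℤ), (∀ x ∈ L, 0 < x) → ¬ Even L.sum → N h L = 0

/-- The initial conditions for `N_{0,3}`, `N_{1/2,2}` and `N_{1,1}` (recall `h = 2g`). -/
def InitialConditions (b : ℝ) (N : ℤ → List ℤ → ℝ) : Prop :=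
  (∀ L1 L2 L3 : ℤ, 0 < L1 → 0 < L2 → 0 < L3 →
    N 0 [L1, L2, L3] = (1 + (-1 : ℝ) ^ (L1 + L2 + L3)) / 2 * (1 / 2)) ∧
  (∀ L1 L2 : ℤ, 0 < L1 → 0 < L2 →
    N 1 [L1, L2] = (1 + (-1 : ℝ) ^ (L1 + L2)) / 2 *
      (b * (((max L1 L2 : ℤ) : ℝ) - 1) / 4)) ∧
  (∀ L1 : ℤ, 0 < L1 →
    N 2 [L1] = (1 + (-1 : ℝ) ^ L1) / 2 *
      (((1 + b) * ((L1 : ℝ) ^ 2 - 4) +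
        b ^ 2 * (5 * (L1 : ℝ) ^ 2 - 12 * (L1 : ℝ) + 4)) / 96))

/-- The asymmetric recursion at `(g, n, L)` with `h = 2g`, `L = L₁ :: T`, `n = 1 + T.length`.
All sums over `p, q ∈ ℤ_{>0}` are finite because the kernels vanish for large `p, q`;
they are written here as sums up to the corresponding vanishing threshold. -/
def AsymRecAt (b : ℝ) (N : ℤ → List ℤ → ℝ) (h : ℤ) (L1 : ℤ) (T : List ℤ) : Prop :=
  N h (L1 :: T) =
    (∑ m ∈ Finset.range T.length, ∑ p ∈ Finset.Icc 1 (L1 + T.getD m 0),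
        (p : ℝ) * kerR (L1 : ℝ) ((T.getD m 0 : ℤ) : ℝ) (p : ℝ) * N h (p :: T.eraseIdx m))
    + b * (∑ p ∈ Finset.Icc 1 L1,
        (p : ℝ) * ((L1 : ℝ) - 1) * kerE (L1 : ℝ) (p : ℝ) * N (h - 1) (p :: T))
    + ∑ p ∈ Finset.Icc 1 L1, ∑ q ∈ Finset.Icc 1 L1,
        (p : ℝ) * (q : ℝ) * kerD (L1 : ℝ) (p : ℝ) (q : ℝ) *
          (((1 + b) / 2) * N (h - 2) (p :: q :: T)
            + ∑ h1 ∈ Finset.Icc 0 h, ∑ S ∈ (Finset.range T.length).powerset,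
                N h1 (p :: selectIdxs T S) * N (h - h1) (q :: removeIdxs T S))

/-- The family satisfies the asymmetric recursion at every `(g, n, L)` with
`2g - 2 + n > 1`, `L ∈ (ℤ_{>0})ⁿ` and `L₁ + ⋯ + L_n` even. -/
def AsymRecursion (b : ℝ) (N : ℤ → List ℤ → ℝ) : Prop :=
  ∀ (h : ℤ) (L1 : ℤ) (T : List ℤ), 0 < L1 → (∀ x ∈ T, 0 < x) →
    3 < h + (1 + (T.length : ℤ)) → Even (L1 + T.sum) → AsymRecAt b N h L1 T

/-- The symmetric recursion at `(g, n, L)` with `h = 2g`. -/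
def SymRecAt (b : ℝ) (N : ℤ → List ℤ → ℝ) (h : ℤ) (L : List ℤ) : Prop :=
  2 * (L.sum : ℝ) * N h L =
    (∑ i ∈ Finset.range L.length, ∑ j ∈ (Finset.range L.length).erase i,
        ∑ p ∈ Finset.Icc 1 (L.getD i 0 + L.getD j 0),
          (p : ℝ) * ramp (((L.getD i 0 : ℤ) : ℝ) + ((L.getD j 0 : ℤ) : ℝ) - (p : ℝ)) *
            N h (p :: removeIdxs L {i, j}))
    + b * (∑ i ∈ Finset.range L.length, ∑ p ∈ Finset.Icc 1 (L.getD i 0),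
        (p : ℝ) * (((L.getD i 0 : ℤ) : ℝ) - 1) *
          ramp (((L.getD i 0 : ℤ) : ℝ) - (p : ℝ)) * N (h - 1) (p :: removeIdxs L {i}))
    + ∑ i ∈ Finset.range L.length, ∑ p ∈ Finset.Icc 1 (L.getD i 0),
        ∑ q ∈ Finset.Icc 1 (L.getD i 0),
          (p : ℝ) * (q : ℝ) * ramp (((L.getD i 0 : ℤ) : ℝ) - (p : ℝ) - (q : ℝ)) *
            ((1 + b) * N (h - 2) (p :: q :: removeIdxs L {i})
              + 2 * ∑ h1 ∈ Finset.Icc 0 h,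
                  ∑ S ∈ ((Finset.range L.length).erase i).powerset,
                    N h1 (p :: selectIdxs L S) *
                      N (h - h1) (q :: selectIdxs L (((Finset.range L.length).erase i) \ S)))


/-- The family satisfies the symmetric recursion at every `(g, n, L)` with
`2g - 2 + n > 1`, `L ∈ (ℤ_{>0})ⁿ` and `L₁ + ⋯ + L_n` even. -/
def SymRecursion (b : ℝ) (N : ℤ → List ℤ → ℝ) : Prop :=
  ∀ (h : ℤ) (L : List ℤ), (∀ x ∈ L, 0 < x) → 0 < L.length →
    3 < h + (L.length : ℤ) → Even L.sum → SymRecAt b N h L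

/-!
Induction on `h + n = 2g + n`. Unstable pairs vanish by convention, tuples with odd sum vanish
by parity, and the stable pairs with `2g + n = 3` are exactly those fixed by the initial
conditions. Otherwise the sum is even and positive, so the symmetric recursion determines
`N_{g,n}(L)` from the values it involves, all of smaller `2g + n`: the first three terms lower it
by one, and the two factors of a splitting term have measures adding up to `2g + n + 1`, so
either one of them is unstable (and the term is zero for both families) or each is at most
`2g + n - 2`.
-/

section SelectIdxs

open Finset

variable {α : Type*} (L : List α) (S : Finset ℕ)

theorem selectIdxs_eq_map_filter :
    selectIdxs L S = (L.zipIdx.filter (·.2 ∈ S)).map Prod.fst := by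
  unfold selectIdxs
  induction L.zipIdx with
  | nil => rfl
  | cons p l ih => by_cases h : p.2 ∈ S <;> simp [h, ih]

theorem removeIdxs_eq_selectIdxs_sdiff :
    removeIdxs L S = selectIdxs L (range L.length \ S) := by
  unfold removeIdxs selectIdxs
  refine List.filterMap_congr fun p hp => ?_
  have hlt := (List.mem_zipIdx' (x := p.1) (i := p.2) hp).1
  by_cases h : p.2 ∈ S <;> simp [h, hlt]

theorem selectIdxs_sublist : (selectIdxs L S).Sublist L := by
  rw [selectIdxs_eq_map_filter]
  simpa [List.zipIdx_map_fst] using (List.filter_sublist (l := L.zipIdx)).map Prod.fst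

theorem removeIdxs_sublist : (removeIdxs L S).Sublist L := by
  rw [removeIdxs_eq_selectIdxs_sdiff]
  exact selectIdxs_sublist L _

theorem length_selectIdxs : (selectIdxs L S).length = #(S ∩ range L.length) := by
  have hcount : L.zipIdx.countP (fun p => decide (p.2 ∈ S))
      = (List.range L.length).countP (· ∈ S) := by
    rw [List.range_eq_range', ← List.zipIdx_map_snd 0 L, List.countP_map]
    rfl
  rw [selectIdxs_eq_map_filter, List.length_map, ← List.countP_eq_length_filter, hcount,
    inter_comm, ← filter_mem_eq_inter, card_def, filter_val, ← Multiset.countP_eq_card_filter]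
  rfl

variable {L S}

theorem length_selectIdxs_of_subset (hS : S ⊆ range L.length) :
    (selectIdxs L S).length = #S := by
  rw [length_selectIdxs, inter_eq_left.mpr hS]

theorem length_removeIdxs_add_card (hS : S ⊆ range L.length) :
    (removeIdxs L S).length + #S = L.length := by
  rw [removeIdxs_eq_selectIdxs_sdiff, length_selectIdxs_of_subset sdiff_subset,
    card_sdiff_add_card_eq_card hS, card_range]

theorem length_selectIdxs_add_length_selectIdxs_sdiff {i : ℕ} (hi : i < L.length)
    (hS : S ⊆ (range L.length).erase i) :
    (selectIdxs L S).length + (selectIdxs L ((range L.length).erase i \ S)).length + 1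
      = L.length := by
  rw [length_selectIdxs_of_subset (hS.trans (erase_subset _ _)),
    length_selectIdxs_of_subset (sdiff_subset.trans (erase_subset _ _)), add_comm #S,
    card_sdiff_add_card_eq_card hS, card_erase_of_mem (mem_range.mpr hi), card_range]
  omega

end SelectIdxs

structure IsSymRecFamily (b : ℝ) (N : ℤ → List ℤ → ℝ) : Prop where
  zero : ZeroConvention N
  parity : ParitySupported N
  init : InitialConditions b N
  recursion : SymRecursion b N

section Uniqueness

open Finset

variable {b : ℝ} {N N' : ℤ → List ℤ → ℝ}

def AgreeBelow (N N' : ℤ → List ℤ → ℝ) (c : ℤ) : Prop :=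
  ∀ (h : ℤ) (L : List ℤ), (∀ x ∈ L, 0 < x) → 0 < L.length → h + L.length < c → N h L = N' h L

theorem AgreeBelow.eq_cons {c : ℤ} (hagree : AgreeBelow N N' c) {h p : ℤ} {T : List ℤ}
    (hp : 0 < p) (hT : ∀ x ∈ T, 0 < x) (hc : h + T.length + 1 < c) :
    N h (p :: T) = N' h (p :: T) :=
  hagree h (p :: T) (List.forall_mem_cons.mpr ⟨hp, hT⟩) (by simp) (by simpa [add_assoc] using hc)

theorem AgreeBelow.mul_eq_mul (hzero : ZeroConvention N) (hzero' : ZeroConvention N')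
    {c : ℤ} (hagree : AgreeBelow N N' c) {h₁ h₂ : ℤ} {X Y : List ℤ}
    (hX : ∀ x ∈ X, 0 < x) (hY : ∀ y ∈ Y, 0 < y) (hX0 : 0 < X.length) (hY0 : 0 < Y.length)
    (hc : h₁ + X.length + (h₂ + Y.length) ≤ c + 1) :
    N h₁ X * N h₂ Y = N' h₁ X * N' h₂ Y := by
  by_cases hXs : h₁ + X.length ≤ 2
  · rw [hzero h₁ X (Or.inr hXs), hzero' h₁ X (Or.inr hXs), zero_mul, zero_mul]
  by_cases hYs : h₂ + Y.length ≤ 2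
  · rw [hzero h₂ Y (Or.inr hYs), hzero' h₂ Y (Or.inr hYs), mul_zero, mul_zero]
  rw [hagree h₁ X hX hX0 (by omega), hagree h₂ Y hY hY0 (by omega)]

theorem eq_of_initialConditions (hinit : InitialConditions b N) (hinit' : InitialConditions b N')
    {h : ℤ} {L : List ℤ} (hL : ∀ x ∈ L, 0 < x) (hh : 0 ≤ h) (hL0 : 0 < L.length)
    (hc : h + L.length = 3) : N h L = N' h L := by
  rcases L with _ | ⟨a₁, _ | ⟨a₂, _ | ⟨a₃, _ | ⟨a₄, L⟩⟩⟩⟩ <;>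
    simp only [List.length_cons, List.length_nil, List.mem_cons, forall_eq_or_imp] at hL hL0 hc
  · omega
  · obtain rfl : h = 2 := by omega
    rw [hinit.2.2 a₁ hL.1, hinit'.2.2 a₁ hL.1]
  · obtain rfl : h = 1 := by omega
    rw [hinit.2.1 a₁ a₂ hL.1 hL.2.1, hinit'.2.1 a₁ a₂ hL.1 hL.2.1]
  · obtain rfl : h = 0 := by omega
    rw [hinit.1 a₁ a₂ a₃ hL.1 hL.2.1 hL.2.2.1, hinit'.1 a₁ a₂ a₃ hL.1 hL.2.1 hL.2.2.1]
  · push_cast at hc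
    omega

theorem eq_of_symRecAt (hzero : ZeroConvention N) (hzero' : ZeroConvention N')
    {h : ℤ} {L : List ℤ} (hL : ∀ x ∈ L, 0 < x) (hL0 : 0 < L.length)
    (hagree : AgreeBelow N N' (h + L.length))
    (hN : SymRecAt b N h L) (hN' : SymRecAt b N' h L) : N h L = N' h L := by
  have hpos : ∀ {p n : ℤ}, p ∈ Icc 1 n → 0 < p := fun hp => (mem_Icc.mp hp).1
  have hsel : ∀ S, ∀ x ∈ selectIdxs L S, 0 < x := fun S x hx =>
    hL x ((selectIdxs_sublist L S).subset hx)
  have hrem : ∀ S, ∀ x ∈ removeIdxs L S, 0 < x := fun S x hx =>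
    hL x ((removeIdxs_sublist L S).subset hx)
  have hsum : (2 * L.sum : ℝ) ≠ 0 := by
    have : 0 < L.sum := List.sum_pos L hL (List.ne_nil_of_length_pos hL0)
    positivity
  refine mul_left_cancel₀ hsum ?_
  unfold SymRecAt at hN hN'
  rw [hN, hN']
  congr 1
  · congr 1
    · refine sum_congr rfl fun i hi => sum_congr rfl fun j hj => sum_congr rfl fun p hp => ?_
      have hij : ({i, j} : Finset ℕ) ⊆ range L.length := by
        simp [insert_subset_iff, mem_range.mp hi, mem_range.mp (mem_erase.mp hj).2]
      have hlen := length_removeIdxs_add_card hij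
      rw [card_pair (mem_erase.mp hj).1.symm] at hlen
      rw [hagree.eq_cons (hpos hp) (hrem _) (by omega)]
    · congr 1
      refine sum_congr rfl fun i hi => sum_congr rfl fun p hp => ?_
      have hlen := length_removeIdxs_add_card (singleton_subset_iff.mpr hi)
      rw [card_singleton] at hlen
      rw [hagree.eq_cons (hpos hp) (hrem _) (by omega)]
  · refine sum_congr rfl fun i hi => sum_congr rfl fun p hp => sum_congr rfl fun q hq => ?_
    have hlen := length_removeIdxs_add_card (singleton_subset_iff.mpr hi)
    rw [card_singleton] at hlen
    replace hp := hpos hp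
    replace hq := hpos hq
    rw [hagree.eq_cons hp (List.forall_mem_cons.mpr ⟨hq, hrem _⟩) (by simp; omega)]
    congr 3
    refine sum_congr rfl fun h₁ _ => sum_congr rfl fun S hS => ?_
    have hlen := length_selectIdxs_add_length_selectIdxs_sdiff (mem_range.mp hi)
      (mem_powerset.mp hS)
    exact hagree.mul_eq_mul hzero hzero' (List.forall_mem_cons.mpr ⟨hp, hsel _⟩)
      (List.forall_mem_cons.mpr ⟨hq, hsel _⟩) (by simp) (by simp) (by simp; omega)

theorem IsSymRecFamily.eq_of_agreeBelow (hN : IsSymRecFamily b N) (hN' : IsSymRecFamily b N')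
    {h : ℤ} {L : List ℤ} (hL : ∀ x ∈ L, 0 < x) (hL0 : 0 < L.length)
    (hagree : AgreeBelow N N' (h + L.length)) : N h L = N' h L := by
  by_cases hunstable : h < 0 ∨ h + L.length ≤ 2
  · rw [hN.zero h L hunstable, hN'.zero h L hunstable]
  by_cases hodd : ¬ Even L.sum
  · rw [hN.parity h L hL hodd, hN'.parity h L hL hodd]
  push Not at hunstable hodd
  rcases (by omega : h + L.length = 3 ∨ 3 < h + L.length) with hinitial | hrecursive
  · exact eq_of_initialConditions hN.init hN'.init hL hunstable.1 hL0 hinitial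
  · exact eq_of_symRecAt hN.zero hN'.zero hL hL0 hagree
      (hN.recursion h L hL hL0 hrecursive hodd) (hN'.recursion h L hL hL0 hrecursive hodd)

end Uniqueness

/-- Two parity-supported refined lattice families satisfying the
initial conditions and the symmetric recursion agree on all stable `(g,n)` and all
tuples of positive integers. -/
theorem symRec_unique (b : ℝ) (N N' : ℤ → List ℤ → ℝ)
    (hzero : ZeroConvention N) (hzero' : ZeroConvention N')
    (hpar : ParitySupported N) (hpar' : ParitySupported N')
    (hinit : InitialConditions b N) (hinit' : InitialConditions b N')
    (hrec : SymRecursion b N) (hrec' : SymRecursion b N') :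
    ∀ (h : ℤ) (L : List ℤ), (∀ x ∈ L, 0 < x) → 0 < L.length →
      2 < h + (L.length : ℤ) → N h L = N' h L := by
  have hN : IsSymRecFamily b N := ⟨hzero, hpar, hinit, hrec⟩
  have hN' : IsSymRecFamily b N' := ⟨hzero', hpar', hinit', hrec'⟩
  have hagree : ∀ c : ℕ, AgreeBelow N N' c := by
    intro c
    induction c with
    | zero =>
      intro h L _ _ hc
      rw [hN.zero h L (Or.inl (by omega)), hN'.zero h L (Or.inl (by omega))]
    | succ c ih =>
      intro h L hL hL0 hc
      rcases (by omega : h + L.length < c ∨ h + L.length = c) with hlt | heq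
      · exact ih h L hL hL0 hlt
      · exact hN.eq_of_agreeBelow hN' hL hL0 (heq ▸ ih)
  intro h L hL hL0 _
  exact hagree (h + L.length).toNat.succ h L hL hL0 (by omega)

end
end

section
/- Let b ∈ ℝ and let V be a refined volume family satisfying the initial conditions and the volume recursion at every (g,n,L) with 2g−2+n > 1 and L ∈ (0,∞)^n. Then every V_{g,n} is homogeneous of degree 6g−6+2n: for every stable pair (g,n), every c > 0, and every L ∈ (0,∞)^n, V_{g,n}(cL₁,…,cL_n) = c^{6g−6+2n}·V_{g,n}(L₁,…,L_n). -/
open scoped BigOperators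

noncomputable section

open MeasureTheory

/-- A refined volume family is indexed by `h = 2g ∈ ℤ` and a tuple of boundary lengths
(a list of reals); by convention it vanishes when `g < 0` or `2g - 2 + n ≤ 0`. -/
def VolZeroConvention (V : ℤ → List ℝ → ℝ) : Prop :=
  ∀ (h : ℤ) (L : List ℝ), h < 0 ∨ h + (L.length : ℤ) ≤ 2 → V h L = 0

/-- Each `V_{g,n}` is a continuous function on `[0,∞)ⁿ`. -/
def VolContinuous (V : ℤ → List ℝ → ℝ) : Prop :=
  ∀ (h : ℤ) (n : ℕ),
    ContinuousOn (fun x : Fin n → ℝ => V h (List.ofFn x)) {x | ∀ i, 0 ≤ x i}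

/-- The initial conditions for `V_{0,3}`, `V_{1/2,2}` and `V_{1,1}` (recall `h = 2g`). -/
def VolInitialConditions (b : ℝ) (V : ℤ → List ℝ → ℝ) : Prop :=
  (∀ L1 L2 L3 : ℝ, 0 ≤ L1 → 0 ≤ L2 → 0 ≤ L3 → V 0 [L1, L2, L3] = 1 / 2) ∧
  (∀ L1 L2 : ℝ, 0 ≤ L1 → 0 ≤ L2 → V 1 [L1, L2] = b * max L1 L2 / 4) ∧
  (∀ L1 : ℝ, 0 ≤ L1 → V 2 [L1] = L1 ^ 2 * (1 + b + 5 * b ^ 2) / 96)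

/-- The volume recursion at `(g, n, L)` with `h = 2g`, `L = L₁ :: T`, `n = 1 + T.length`.
All integrals are effectively over finite intervals since the kernels vanish for `p`
(respectively `p + q`) large. -/
def VolRecAt (b : ℝ) (V : ℤ → List ℝ → ℝ) (h : ℤ) (L1 : ℝ) (T : List ℝ) : Prop :=
  V h (L1 :: T) =
    (∑ m ∈ Finset.range T.length, ∫ p in Set.Ioi (0 : ℝ),
        p * kerR L1 (T.getD m 0) p * V h (p :: T.eraseIdx m))
    + b * (∫ p in Set.Ioi (0 : ℝ),
        p * L1 * kerE L1 p * V (h - 1) (p :: T))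
    + ∫ p in Set.Ioi (0 : ℝ), ∫ q in Set.Ioi (0 : ℝ),
        p * q * kerD L1 p q *
          (((1 + b) / 2) * V (h - 2) (p :: q :: T)
            + ∑ h1 ∈ Finset.Icc 0 h, ∑ S ∈ (Finset.range T.length).powerset,
                V h1 (p :: selectIdxs T S) * V (h - h1) (q :: removeIdxs T S))

/-- The family satisfies the volume recursion at every `(g, n, L)` with
`2g - 2 + n > 1` and `L ∈ (0,∞)ⁿ`. -/
def VolRecursion (b : ℝ) (V : ℤ → List ℝ → ℝ) : Prop :=
  ∀ (h : ℤ) (L1 : ℝ) (T : List ℝ), 0 < L1 → (∀ x ∈ T, 0 < x) →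
    3 < h + (1 + (T.length : ℤ)) → VolRecAt b V h L1 T

/-!
Induction on `2g - 2 + n`. The kernels `R`, `E`, `D` are invariant under scaling all their
arguments by `c > 0`, so substituting `p ↦ c p`, `q ↦ c q` in the recursion at `c L` turns each
of its three terms into `c ^ (6g - 6 + 2n)` times the same term at `L`: every integration variable
and every prefactor `p`, `q`, `L₁` contributes one power of `c`, and the volumes of smaller
`2g - 2 + n` inside the integrals scale by the induction hypothesis. The induction starts from
the vanishing convention and the three initial conditions, which are homogeneous of degrees
`0`, `1`, `2`.
-/

open Set MeasureTheory

section Lists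

variable {α β : Type*}

theorem selectIdxs_map (f : α → β) (L : List α) (S : Finset ℕ) :
    selectIdxs (L.map f) S = (selectIdxs L S).map f := by
  simp only [selectIdxs, List.zipIdx_map, List.filterMap_map, List.map_filterMap]
  congr 1
  funext p
  by_cases hp : p.2 ∈ S <;> simp [hp]

theorem removeIdxs_map (f : α → β) (L : List α) (S : Finset ℕ) :
    removeIdxs (L.map f) S = (removeIdxs L S).map f := by
  simp only [removeIdxs, List.zipIdx_map, List.filterMap_map, List.map_filterMap]
  congr 1
  funext p
  by_cases hp : p.2 ∈ S <;> simp [hp]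

theorem length_selectIdxs_add_length_removeIdxs (L : List α) (S : Finset ℕ) :
    (selectIdxs L S).length + (removeIdxs L S).length = L.length := by
  rw [← List.length_zipIdx (l := L) (i := 0)]
  unfold selectIdxs removeIdxs
  induction L.zipIdx with
  | nil => rfl
  | cons p l ih => by_cases hp : p.2 ∈ S <;> simp [hp] <;> omega

theorem mem_of_mem_selectIdxs {L : List α} {S : Finset ℕ} {x : α} (hx : x ∈ selectIdxs L S) :
    x ∈ L := by
  obtain ⟨p, hp, hpx⟩ := List.mem_filterMap.1 hx
  split_ifs at hpx
  cases hpx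
  exact List.fst_mem_of_mem_zipIdx hp

theorem mem_of_mem_removeIdxs {L : List α} {S : Finset ℕ} {x : α} (hx : x ∈ removeIdxs L S) :
    x ∈ L := by
  obtain ⟨p, hp, hpx⟩ := List.mem_filterMap.1 hx
  split_ifs at hpx
  cases hpx
  exact List.fst_mem_of_mem_zipIdx hp

end Lists

section Kernels

variable {c : ℝ}

theorem ramp_mul (hc : 0 ≤ c) (x : ℝ) : ramp (c * x) = c * ramp x := by
  rw [ramp, ramp, mul_max_of_nonneg _ _ hc, mul_zero]

theorem kerR_mul (hc : 0 < c) (L1 Lm p : ℝ) :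
    kerR (c * L1) (c * Lm) (c * p) = kerR L1 Lm p := by
  have hramp : ∀ u v w : ℝ, ramp (c * u + c * v - c * w) = c * ramp (u + v - w) :=
    fun u v w => by rw [← ramp_mul hc.le, mul_sub, mul_add]
  rw [kerR, kerR, hramp, ← mul_neg, hramp, show c * L1 - c * Lm - c * p = c * (L1 - Lm - p) by ring,
    ramp_mul hc.le]
  field_simp

theorem kerE_mul (hc : 0 < c) (L1 p : ℝ) : kerE (c * L1) (c * p) = kerE L1 p := by
  rw [kerE, kerE, ← mul_sub, ramp_mul hc.le]
  field_simp

theorem kerD_mul (hc : 0 < c) (L1 p q : ℝ) :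
    kerD (c * L1) (c * p) (c * q) = kerD L1 p q := by
  rw [kerD, kerD, ← mul_sub, ← mul_sub, ramp_mul hc.le]
  field_simp

end Kernels

theorem setIntegral_Ioi_zero_of_comp_mul_eq {f g : ℝ → ℝ} {c : ℝ} (hc : 0 < c) {k : ℤ}
    (hfg : ∀ x, 0 < x → f (c * x) = c ^ (k - 1) * g x) :
    ∫ x in Ioi 0, f x = c ^ k * ∫ x in Ioi 0, g x := by
  have hsub := integral_comp_mul_left_Ioi f 0 hc
  rw [mul_zero, smul_eq_mul, setIntegral_congr_fun measurableSet_Ioi hfg, integral_const_mul,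
    zpow_sub_one₀ hc.ne', mul_right_comm, mul_comm c⁻¹] at hsub
  exact (mul_right_cancel₀ (inv_ne_zero hc.ne') hsub).symm

section Homogeneity

variable {b : ℝ} {V : ℤ → List ℝ → ℝ} {c : ℝ}

/-- Homogeneity of `V_{g,n}` at `x :: T`, where `h = 2g` and `n = |T| + 1`, so that the exponent
`3h + 2|T| - 4` is `6g - 6 + 2n`. -/
def HomogeneousAt (V : ℤ → List ℝ → ℝ) (c : ℝ) (h : ℤ) (x : ℝ) (T : List ℝ) : Prop :=
  V h ((c * x) :: T.map (c * ·)) = c ^ (3 * h + 2 * (T.length : ℤ) - 4) * V h (x :: T)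

def HomogeneousBelow (V : ℤ → List ℝ → ℝ) (c : ℝ) (N : ℤ) : Prop :=
  ∀ h x T, 0 < x → (∀ y ∈ T, 0 < y) → h + T.length < N → HomogeneousAt V c h x T

theorem HomogeneousAt.eq_zpow {h : ℤ} {x : ℝ} {T : List ℝ} (H : HomogeneousAt V c h x T)
    {k : ℤ} (hk : 3 * h + 2 * (T.length : ℤ) - 4 = k) :
    V h ((c * x) :: T.map (c * ·)) = c ^ k * V h (x :: T) :=
  hk ▸ H

theorem HomogeneousAt.mul (hc : 0 < c) {h1 h2 : ℤ} {p q : ℝ} {A B : List ℝ}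
    (H1 : HomogeneousAt V c h1 p A) (H2 : HomogeneousAt V c h2 q B) :
    V h1 ((c * p) :: A.map (c * ·)) * V h2 ((c * q) :: B.map (c * ·)) =
      c ^ (3 * (h1 + h2) + 2 * ((A.length + B.length : ℕ) : ℤ) - 8) *
        (V h1 (p :: A) * V h2 (q :: B)) := by
  rw [H1, H2, mul_mul_mul_comm, ← zpow_add₀ hc.ne']
  congr 2
  push_cast
  ring

theorem VolZeroConvention.cons_eq_zero (hzero : VolZeroConvention V) {h : ℤ} {T : List ℝ}
    (hsmall : h < 0 ∨ h + T.length ≤ 1) (x : ℝ) : V h (x :: T) = 0 :=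
  hzero h _ (by rw [List.length_cons]; omega)

theorem homogeneousAt_of_vanish (hzero : VolZeroConvention V) {h : ℤ} {x : ℝ} {T : List ℝ}
    (hsmall : h < 0 ∨ h + T.length ≤ 1) : HomogeneousAt V c h x T := by
  rw [HomogeneousAt, hzero.cons_eq_zero hsmall, hzero.cons_eq_zero (by rwa [List.length_map]),
    mul_zero]

theorem homogeneousAt_initial (hinit : VolInitialConditions b V) (hc : 0 < c) {h : ℤ} {x : ℝ}
    {T : List ℝ} (hx : 0 < x) (hT : ∀ y ∈ T, 0 < y) (hh : 0 ≤ h) (hsize : h + T.length = 2) :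
    HomogeneousAt V c h x T := by
  obtain ⟨h03, h12, h21⟩ := hinit
  have hcx := mul_pos hc hx
  rcases T with _ | ⟨y, _ | ⟨z, _ | ⟨w, T⟩⟩⟩
  · obtain rfl : h = 2 := by simpa using hsize
    rw [HomogeneousAt, List.map_nil, h21 _ hcx.le, h21 _ hx.le]
    norm_num
    ring
  · obtain rfl : h = 1 := by simp only [List.length_singleton] at hsize; omega
    have hy : 0 < y := hT y List.mem_cons_self
    rw [HomogeneousAt, List.map_singleton, h12 _ _ hcx.le (mul_pos hc hy).le, h12 _ _ hx.le hy.le,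
      ← mul_max_of_nonneg _ _ hc.le]
    norm_num
    ring
  · obtain rfl : h = 0 := by simp only [List.length_cons, List.length_nil] at hsize; omega
    have hy : 0 < y := hT y List.mem_cons_self
    have hz : 0 < z := hT z (List.mem_cons_of_mem y List.mem_cons_self)
    rw [HomogeneousAt, List.map_cons, List.map_singleton,
      h03 _ _ _ hcx.le (mul_pos hc hy).le (mul_pos hc hz).le, h03 _ _ _ hx.le hy.le hz.le]
    norm_num
  · simp only [List.length_cons] at hsize
    omega

def volTermR (V : ℤ → List ℝ → ℝ) (h : ℤ) (L1 : ℝ) (T : List ℝ) : ℝ :=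
  ∑ m ∈ Finset.range T.length, ∫ p in Ioi (0 : ℝ),
    p * kerR L1 (T.getD m 0) p * V h (p :: T.eraseIdx m)

def volTermE (V : ℤ → List ℝ → ℝ) (h : ℤ) (L1 : ℝ) (T : List ℝ) : ℝ :=
  ∫ p in Ioi (0 : ℝ), p * L1 * kerE L1 p * V (h - 1) (p :: T)

def volSplitSum (V : ℤ → List ℝ → ℝ) (h : ℤ) (p q : ℝ) (T : List ℝ) : ℝ :=
  ∑ h1 ∈ Finset.Icc 0 h, ∑ S ∈ (Finset.range T.length).powerset,
    V h1 (p :: selectIdxs T S) * V (h - h1) (q :: removeIdxs T S)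

def volTermD (b : ℝ) (V : ℤ → List ℝ → ℝ) (h : ℤ) (L1 : ℝ) (T : List ℝ) : ℝ :=
  ∫ p in Ioi (0 : ℝ), ∫ q in Ioi (0 : ℝ),
    p * q * kerD L1 p q * ((1 + b) / 2 * V (h - 2) (p :: q :: T) + volSplitSum V h p q T)

theorem volRecAt_iff {h : ℤ} {L1 : ℝ} {T : List ℝ} :
    VolRecAt b V h L1 T ↔
      V h (L1 :: T) = volTermR V h L1 T + b * volTermE V h L1 T + volTermD b V h L1 T :=
  Iff.rfl

section RecursionStep

variable (hc : 0 < c) {h : ℤ} {T : List ℝ} (hT : ∀ y ∈ T, 0 < y)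
  (IH : HomogeneousBelow V c (h + T.length))
include hc hT IH

theorem volTermR_map_mul (L1 : ℝ) :
    volTermR V h (c * L1) (T.map (c * ·)) =
      c ^ (3 * h + 2 * (T.length : ℤ) - 4) * volTermR V h L1 T := by
  rw [volTermR, volTermR, Finset.mul_sum, List.length_map]
  refine Finset.sum_congr rfl fun m hm => ?_
  have hm : m < T.length := Finset.mem_range.1 hm
  rw [← mul_zero c, List.getD_map, mul_zero, List.eraseIdx_map]
  refine setIntegral_Ioi_zero_of_comp_mul_eq hc fun p hp => ?_
  have hpos : ∀ y ∈ T.eraseIdx m, 0 < y := fun y hy => hT y (List.mem_of_mem_eraseIdx hy)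
  have hlen := List.length_eraseIdx_add_one hm
  rw [kerR_mul hc, (IH h p _ hp hpos (by omega)).eq_zpow (k := 3 * h + 2 * (T.length : ℤ) - 6)
    (by omega), show (3 * h + 2 * (T.length : ℤ) - 4) - 1 = 3 * h + 2 * (T.length : ℤ) - 6 + 1
    by ring, zpow_add_one₀ hc.ne']
  ring

theorem volTermE_map_mul (L1 : ℝ) :
    volTermE V h (c * L1) (T.map (c * ·)) =
      c ^ (3 * h + 2 * (T.length : ℤ) - 4) * volTermE V h L1 T := by
  refine setIntegral_Ioi_zero_of_comp_mul_eq hc fun p hp => ?_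
  rw [kerE_mul hc, (IH (h - 1) p T hp hT (by omega)).eq_zpow
    (k := 3 * h + 2 * (T.length : ℤ) - 7) (by omega),
    show (3 * h + 2 * (T.length : ℤ) - 4) - 1 = 3 * h + 2 * (T.length : ℤ) - 7 + 1 + 1 by ring,
    zpow_add_one₀ hc.ne', zpow_add_one₀ hc.ne']
  ring

theorem volSplitSum_map_mul (hzero : VolZeroConvention V) {p q : ℝ} (hp : 0 < p) (hq : 0 < q) :
    volSplitSum V h (c * p) (c * q) (T.map (c * ·)) =
      c ^ (3 * h + 2 * (T.length : ℤ) - 8) * volSplitSum V h p q T := by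
  rw [volSplitSum, volSplitSum, Finset.mul_sum, List.length_map]
  refine Finset.sum_congr rfl fun h1 _ => ?_
  rw [Finset.mul_sum]
  refine Finset.sum_congr rfl fun S _ => ?_
  have hlen := length_selectIdxs_add_length_removeIdxs T S
  have hsel : ∀ y ∈ selectIdxs T S, 0 < y := fun y hy => hT y (mem_of_mem_selectIdxs hy)
  have hrem : ∀ y ∈ removeIdxs T S, 0 < y := fun y hy => hT y (mem_of_mem_removeIdxs hy)
  rw [selectIdxs_map, removeIdxs_map]
  -- A factor outside the range of `IH` forces the other one to vanish.
  rcases le_or_gt (h1 + (selectIdxs T S).length) 1 with hv1 | hv1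
  · rw [hzero.cons_eq_zero (Or.inr hv1),
      hzero.cons_eq_zero (T := (selectIdxs T S).map (c * ·)) (Or.inr (by rwa [List.length_map]))]
    simp
  rcases le_or_gt (h - h1 + (removeIdxs T S).length) 1 with hv2 | hv2
  · rw [hzero.cons_eq_zero (Or.inr hv2),
      hzero.cons_eq_zero (T := (removeIdxs T S).map (c * ·)) (Or.inr (by rwa [List.length_map]))]
    simp
  rw [HomogeneousAt.mul hc (IH h1 p _ hp hsel (by omega)) (IH (h - h1) q _ hq hrem (by omega)),
    hlen, add_sub_cancel]

theorem volTermD_map_mul (hzero : VolZeroConvention V) (L1 : ℝ) :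
    volTermD b V h (c * L1) (T.map (c * ·)) =
      c ^ (3 * h + 2 * (T.length : ℤ) - 4) * volTermD b V h L1 T := by
  refine setIntegral_Ioi_zero_of_comp_mul_eq hc fun p hp => ?_
  refine setIntegral_Ioi_zero_of_comp_mul_eq hc fun q hq => ?_
  have hV := (IH (h - 2) p (q :: T) hp (List.forall_mem_cons.2 ⟨hq, hT⟩)
    (by rw [List.length_cons]; omega)).eq_zpow (k := 3 * h + 2 * (T.length : ℤ) - 8)
    (by rw [List.length_cons]; omega)
  rw [List.map_cons] at hV
  rw [kerD_mul hc, volSplitSum_map_mul hc hT IH hzero hp hq, hV,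
    show (3 * h + 2 * (T.length : ℤ) - 4) - 1 - 1 = 3 * h + 2 * (T.length : ℤ) - 8 + 1 + 1 by ring,
    zpow_add_one₀ hc.ne', zpow_add_one₀ hc.ne']
  ring

theorem homogeneousAt_of_homogeneousBelow (hzero : VolZeroConvention V)
    (hrec : VolRecursion b V) {x : ℝ} (hx : 0 < x) (hsize : 3 ≤ h + T.length) :
    HomogeneousAt V c h x T := by
  have hcT : ∀ y ∈ T.map (c * ·), 0 < y := by simpa using fun y hy => mul_pos hc (hT y hy)
  rw [HomogeneousAt,
    volRecAt_iff.1 (hrec h _ _ (mul_pos hc hx) hcT (by rw [List.length_map]; omega)),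
    volRecAt_iff.1 (hrec h x T hx hT (by omega)), volTermR_map_mul hc hT IH,
    volTermE_map_mul hc hT IH, volTermD_map_mul hc hT IH hzero]
  ring

end RecursionStep

theorem homogeneousAt_of_volRecursion (hzero : VolZeroConvention V)
    (hinit : VolInitialConditions b V) (hrec : VolRecursion b V) (hc : 0 < c) {h : ℤ} {x : ℝ}
    {T : List ℝ} (hx : 0 < x) (hT : ∀ y ∈ T, 0 < y) : HomogeneousAt V c h x T := by
  suffices hbelow : ∀ N : ℕ, HomogeneousBelow V c N from
    hbelow (h + T.length + 1).toNat h x T hx hT (by omega)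
  intro N
  induction N with
  | zero => exact fun h x T _ _ hneg => homogeneousAt_of_vanish hzero (Or.inl (by omega))
  | succ N IH =>
    intro h x T hx hT hN
    rcases lt_or_ge h 0 with hneg | hnonneg
    · exact homogeneousAt_of_vanish hzero (Or.inl hneg)
    rcases lt_trichotomy (h + T.length) 2 with hsmall | hinitial | hlarge
    · exact homogeneousAt_of_vanish hzero (Or.inr (by omega))
    · exact homogeneousAt_initial hinit hc hx hT hnonneg hinitial
    · exact homogeneousAt_of_homogeneousBelow hc hT
        (fun h' x' T' hx' hT' hlt => IH h' x' T' hx' hT' (by omega)) hzero hrec hx hlarge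

end Homogeneity

theorem vol_homogeneous_general (b : ℝ) (V : ℤ → List ℝ → ℝ)
    (hzero : VolZeroConvention V)
    (hinit : VolInitialConditions b V) (hrec : VolRecursion b V) :
    ∀ (h : ℤ) (L : List ℝ), 0 < L.length → 2 < h + (L.length : ℤ) →
      ∀ c : ℝ, 0 < c → (∀ x ∈ L, 0 < x) →
        V h (L.map fun x => c * x) =
          c ^ (3 * h + 2 * (L.length : ℤ) - 6) * V h L := by
  intro h L hlen _ c hc hpos
  obtain ⟨x, T, rfl⟩ := List.exists_cons_of_length_pos hlen
  have H := homogeneousAt_of_volRecursion hzero hinit hrec hc (h := h)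
    (hpos x List.mem_cons_self) fun y hy => hpos y (List.mem_cons_of_mem x hy)
  rw [List.map_cons, H.eq_zpow (k := 3 * h + 2 * ((x :: T).length : ℤ) - 6)
    (by rw [List.length_cons]; omega)]

/-- A refined volume family satisfying the initial conditions and the
volume recursion is homogeneous of degree `6g - 6 + 2n` (i.e. `3h + 2n - 6` with
`h = 2g`) on the positive orthant. -/
theorem vol_homogeneous (b : ℝ) (V : ℤ → List ℝ → ℝ)
    (hzero : VolZeroConvention V) (hcont : VolContinuous V)
    (hinit : VolInitialConditions b V) (hrec : VolRecursion b V) :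
    ∀ (h : ℤ) (L : List ℝ), 0 < L.length → 2 < h + (L.length : ℤ) →
      ∀ c : ℝ, 0 < c → (∀ x ∈ L, 0 < x) →
        V h (L.map fun x => c * x) =
          c ^ (3 * h + 2 * (L.length : ℤ) - 6) * V h L :=
  vol_homogeneous_general b V hzero hinit hrec

end
end
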